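/- arXiv:math/9503235 — 7 statements merged into one kernel-verified Lean document; each statement's English description precedes it below -/
import Mathlib

section
/- For integers n ≥ 1, 1 ≤ k ≤ n, and m ≥ 0, the sum over j ≥ 0 of C(j,m)·C(k-1,j)/C(n,j) equals (n+1)/(n+m+2-k) · C(k-1,m)/C(n+m+1-k,m). -/
/-!
Write `1 / C(n, j) = (n + 1) B(j, n - j)` with the Beta integral
`B(a, b) = ∫₀¹ xᵃ (1 - x)ᵇ dx = a! b! / (a + b + 1)!` (here `betaNat a b`).
Since `C(j, m) C(k - 1, j) = C(k - 1, m) C(K, j - m)` with `K = k - 1 - m`, the sum becomes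
`(n + 1) C(k - 1, m) ∑ᵢ C(K, i) B(m + i, d + K - i)` with `d = n + 1 - k`, and the binomial
theorem `∑ᵢ C(K, i) xⁱ (1 - x)^(K - i) = 1` under the integral collapses this to
`(n + 1) C(k - 1, m) B(m, d)`. Integrals are avoided by proving the collapse by induction on `K`,
from Pascal's rule and `B(a + 1, b) + B(a, b + 1) = B(a, b)`.
-/

open Finset Nat

def betaNat (a b : ℕ) : ℚ := (a ! * b ! : ℚ) / (a + b + 1)!

theorem betaNat_eq_inv (a b : ℕ) :
    betaNat a b = (((a + b + 1 : ℕ) : ℚ) * (a + b).choose a)⁻¹ := by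
  rw [betaNat, Nat.cast_choose ℚ (Nat.le_add_right a b), Nat.add_sub_cancel_left,
    Nat.factorial_succ]
  push_cast
  field_simp

theorem betaNat_succ_left_add_succ_right (a b : ℕ) :
    betaNat (a + 1) b + betaNat a (b + 1) = betaNat a b := by
  simp only [betaNat, show a + 1 + b + 1 = a + b + 1 + 1 by omega,
    show a + (b + 1) + 1 = a + b + 1 + 1 by omega, Nat.factorial_succ]
  push_cast
  field_simp
  ring

theorem sum_range_choose_mul_betaNat (K a b : ℕ) :
    ∑ i ∈ range (K + 1), (K.choose i : ℚ) * betaNat (a + i) (b + (K - i)) = betaNat a b := by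
  induction K generalizing a b with
  | zero => simp
  | succ K ih =>
    rw [sum_choose_succ_mul (fun i j => betaNat (a + i) (b + j)),
      ← betaNat_succ_left_add_succ_right, add_comm (betaNat (a + 1) b), ← ih (a + 1) b,
      ← ih a (b + 1)]
    congr 1
    · refine sum_congr rfl fun i hi => ?_
      rw [mem_range] at hi
      rw [show b + (K + 1 - i) = b + 1 + (K - i) by omega]
    · simp only [add_right_comm a 1, add_assoc]

theorem inv_choose_eq_betaNat {n j : ℕ} (h : j ≤ n) :
    ((n.choose j : ℕ) : ℚ)⁻¹ = (n + 1) * betaNat j (n - j) := by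
  rw [betaNat_eq_inv, Nat.add_sub_cancel' h]
  push_cast
  field_simp

theorem sum_range_choose_div_choose (K a b : ℕ) :
    ∑ i ∈ range (K + 1), (K.choose i : ℚ) * ((a + K + b).choose (a + i) : ℚ)⁻¹ =
      (a + K + b + 1) * betaNat a b := by
  rw [← sum_range_choose_mul_betaNat K, mul_sum]
  refine sum_congr rfl fun i hi => ?_
  rw [mem_range] at hi
  rw [inv_choose_eq_betaNat (by omega), show a + K + b - (a + i) = b + (K - i) by omega]
  push_cast
  ring

theorem sum_range_choose_mul_choose_mul {R : Type*} [CommSemiring R] {c N : ℕ} (m : ℕ)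
    (hc : c < N) (f : ℕ → R) :
    ∑ j ∈ range N, (j.choose m : R) * c.choose j * f j =
      c.choose m * ∑ i ∈ range (c + 1 - m), ((c - m).choose i : R) * f (m + i) := by
  have hsub : Ico m (c + 1) ⊆ range N := fun j hj => by
    simp only [mem_Ico, mem_range] at hj ⊢; omega
  rw [← sum_subset hsub fun j _ hj => ?_, sum_Ico_eq_sum_range, mul_sum]
  · refine sum_congr rfl fun i _ => ?_
    rw [← mul_assoc, ← Nat.cast_mul, mul_comm ((m + i).choose m),
      Nat.choose_mul (Nat.le_add_right m i), Nat.add_sub_cancel_left]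
    push_cast
    ring
  · simp only [mem_Ico, not_and_or, not_le, not_lt] at hj
    rcases hj with hj | hj
    · simp [Nat.choose_eq_zero_of_lt hj]
    · simp [Nat.choose_eq_zero_of_lt (show c < j by omega)]

theorem choose_ratio_weighted_sum_general (n k m : ℕ) (hk1 : 1 ≤ k) (hkn : k ≤ n) :
    (∑ j ∈ Finset.range (n + 1),
        (Nat.choose j m : ℚ) * (Nat.choose (k - 1) j : ℚ) / (Nat.choose n j : ℚ)) =
      ((n : ℚ) + 1) / ((n : ℚ) + (m : ℚ) + 2 - (k : ℚ)) *
        ((Nat.choose (k - 1) m : ℚ) / (Nat.choose (n + m + 1 - k) m : ℚ)) := by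
  obtain ⟨c, rfl⟩ : ∃ c, k = c + 1 := ⟨k - 1, by omega⟩
  simp only [div_eq_mul_inv, Nat.add_sub_cancel]
  rw [sum_range_choose_mul_choose_mul m (show c < n + 1 by omega)]
  rcases lt_or_ge c m with hcm | hmc
  · simp [Nat.choose_eq_zero_of_lt hcm]
  obtain ⟨K, rfl⟩ : ∃ K, c = m + K := ⟨c - m, by omega⟩
  obtain ⟨d, rfl⟩ : ∃ d, n = m + K + d := ⟨n - (m + K), by omega⟩
  rw [show m + K + 1 - m = K + 1 by omega, Nat.add_sub_cancel_left,
    sum_range_choose_div_choose, show m + K + d + m + 1 - (m + K + 1) = m + d by omega,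
    betaNat_eq_inv, show ((m + K + d : ℕ) : ℚ) + m + 2 - (m + K + 1 : ℕ) = m + d + 1 by
      push_cast; ring]
  have hchoose : ((m + d).choose m : ℚ) ≠ 0 := by
    exact_mod_cast (Nat.choose_pos (Nat.le_add_right m d)).ne'
  push_cast
  field_simp

theorem choose_ratio_weighted_sum (n k m : ℕ) (hk1 : 1 ≤ k) (hkn : k ≤ n)
    (hm : m + k ≤ n + 1) :
    (∑ j ∈ Finset.range (n + 1),
        (Nat.choose j m : ℚ) * (Nat.choose (k - 1) j : ℚ) / (Nat.choose n j : ℚ)) =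
      ((n : ℚ) + 1) / ((n : ℚ) + (m : ℚ) + 2 - (k : ℚ)) *
        ((Nat.choose (k - 1) m : ℚ) / (Nat.choose (n + m + 1 - k) m : ℚ)) :=
  choose_ratio_weighted_sum_general n k m hk1 hkn
end

section
/- For 1 ≤ k ≤ n, the sum over j ≥ 0 of C(k-1,j)/C(n,j) equals (n+1)/(n+2-k). -/
/-! Each term rewrites as `C(m, j) / C(n, j) = C(n - j, n - m) / C(n, m)` (both sides count the
same choices of nested subsets `J ⊆ M ⊆ [n]`), so with `m = k - 1` the numerators sum to
`C(n + 1, m)` by the hockey-stick identity, and `C(n + 1, m) / C(n, m) = (n + 1) / (n + 1 - m)`. -/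

open Finset

namespace Nat

theorem choose_mul_choose_eq_choose_mul_choose_sub {n m j : ℕ} (hjm : j ≤ m) (hmn : m ≤ n) :
    n.choose m * m.choose j = n.choose j * (n - j).choose (n - m) := by
  rw [choose_mul hjm, ← choose_symm (by omega : m - j ≤ n - j)]
  congr 2
  omega

theorem sum_range_choose_sub_sub {n m : ℕ} (hmn : m ≤ n) :
    ∑ j ∈ range (m + 1), (n - j).choose (n - m) = (n + 1).choose m := by
  rw [← sum_range_reflect]
  calc ∑ j ∈ range (m + 1), (n - (m + 1 - 1 - j)).choose (n - m)
      = ∑ j ∈ range (m + 1), (j + (n - m)).choose (n - m) :=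
        sum_congr rfl fun j hj => by
          rw [mem_range] at hj
          congr 1
          omega
    _ = (n + 1).choose m := by
      rw [sum_range_add_choose, ← choose_symm (by omega : m ≤ n + 1)]
      congr 1 <;> omega

variable {K : Type*} [Field K] [CharZero K]

theorem cast_choose_div_cast_choose {n m j : ℕ} (hjm : j ≤ m) (hmn : m ≤ n) :
    (m.choose j : K) / n.choose j = (n - j).choose (n - m) / n.choose m := by
  rw [div_eq_div_iff (by exact_mod_cast (choose_pos (hjm.trans hmn)).ne')
    (by exact_mod_cast (choose_pos hmn).ne')]
  exact_mod_cast (mul_comm _ _).trans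
    ((choose_mul_choose_eq_choose_mul_choose_sub hjm hmn).trans (mul_comm _ _))

theorem cast_succ_choose_div_cast_choose {n m : ℕ} (hmn : m ≤ n) :
    ((n + 1).choose m : K) / n.choose m = (n + 1) / (n + 1 - m) := by
  have hsub : (n : K) + 1 - m ≠ 0 := by
    rw [← Nat.cast_succ, ← Nat.cast_sub (by omega)]
    exact_mod_cast (by omega : n + 1 - m ≠ 0)
  rw [div_eq_div_iff (by exact_mod_cast (choose_pos hmn).ne') hsub]
  have h := congrArg (Nat.cast : ℕ → K) (choose_mul_succ_eq n m)
  push_cast [Nat.cast_sub (by omega : m ≤ n + 1)] at h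
  linear_combination -h

theorem sum_range_cast_choose_div_cast_choose {n m : ℕ} (hmn : m ≤ n) :
    ∑ j ∈ range (n + 1), (m.choose j : K) / n.choose j = (n + 1) / (n + 1 - m) := by
  have hvanish : ∑ j ∈ range (n + 1), (m.choose j : K) / n.choose j =
      ∑ j ∈ range (m + 1), (m.choose j : K) / n.choose j := by
    refine (sum_subset (range_subset_range.mpr (by omega)) fun j _ hj => ?_).symm
    rw [mem_range, not_lt] at hj
    rw [choose_eq_zero_of_lt (by omega), Nat.cast_zero, zero_div]
  rw [hvanish, sum_congr rfl fun j hj =>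
      cast_choose_div_cast_choose (Nat.lt_succ_iff.mp (mem_range.mp hj)) hmn,
    ← sum_div, ← Nat.cast_sum, sum_range_choose_sub_sub hmn, cast_succ_choose_div_cast_choose hmn]

end Nat

theorem choose_ratio_sum (n k : ℕ) (hk1 : 1 ≤ k) (hkn : k ≤ n) :
    (∑ j ∈ Finset.range (n + 1),
        (Nat.choose (k - 1) j : ℚ) / (Nat.choose n j : ℚ)) =
      ((n : ℚ) + 1) / ((n : ℚ) + 2 - (k : ℚ)) := by
  obtain ⟨m, rfl⟩ := Nat.exists_eq_add_of_le' hk1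
  rw [Nat.add_sub_cancel, Nat.sum_range_cast_choose_div_cast_choose (by omega)]
  push_cast
  ring_nf
end

section
/- If for each k with 1 ≤ k ≤ n the random variable r_k takes value j with probability q_{k,j-1} − q_{k,j}, where q_{kj} = C(k-1,j)/C(n,j), and the r_k are independent, then the expected value of the product (z+r_1)(z+r_2)···(z+r_n) equals ∏_{k=1}^n (z + (n+1)/(n+2-k)), which equals (1/(n+1)!)·∏_{k=2}^{n+1} (kz + n + 1). -/
/-!
Each factor is `E[z + r_k] = z + ∑_{j<n} P(r_k > j)`, and
`∑_j C(m,j)/C(n,j) = (n+1)/(n+1-m)` telescopes, because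
`C(m,j)/C(n,j) · (n+1-m)/(n+1) = C(m,j)/C(n+1,j) - C(m,j+1)/C(n+1,j+1)`.
The second identity is the reflection `k ↦ n+2-k` followed by clearing denominators.
-/

open Finset

/-- `q n k j = C(k-1,j)/C(n,j)`, the probability that rank `r_k` exceeds `j`
in uniform hashing on a table of size `n`. -/
def hashTail (n k j : ℕ) : ℚ := (Nat.choose (k - 1) j : ℚ) / (Nat.choose n j : ℚ)

/-- The expectation of `z + r` through the tail probabilities `q j = P(r > j)`. -/
theorem sum_Icc_sub_mul_add_eq {R : Type*} [CommRing R] (q : ℕ → R) (z : R) (n : ℕ) :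
    ∑ j ∈ Icc 1 n, (q (j - 1) - q j) * (z + j) =
      z * q 0 + ∑ j ∈ range n, q j - (z + n) * q n := by
  induction n with
  | zero => simp
  | succ n ih =>
    rw [sum_Icc_succ_top (by omega), ih, sum_range_succ, Nat.add_sub_cancel]
    push_cast
    ring

theorem cast_choose_succ_right_mul {R : Type*} [CommRing R] (m j : ℕ) :
    (m.choose (j + 1) : R) * (j + 1) = m.choose j * (m - j) := by
  rcases le_or_gt j m with h | h
  · have := congrArg (Nat.cast : ℕ → R) (Nat.choose_succ_right_eq m j)
    push_cast [Nat.cast_sub h] at this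
    exact this
  · simp [Nat.choose_eq_zero_of_lt h, Nat.choose_eq_zero_of_lt (h.trans j.lt_succ_self)]

section CharZeroField

variable {K : Type*} [Field K] [CharZero K]

theorem choose_div_choose_mul_eq_sub {m n j : ℕ} (hj : j ≤ n) :
    (m.choose j : K) / n.choose j * ((n + 1 - m) / (n + 1)) =
      m.choose j / (n + 1).choose j - m.choose (j + 1) / (n + 1).choose (j + 1) := by
  have hn : (n.choose j : K) ≠ 0 := by exact_mod_cast (Nat.choose_pos hj).ne'
  have hnj : (n + 1 - j : K) ≠ 0 := sub_ne_zero.mpr (by exact_mod_cast (by omega : n + 1 ≠ j))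
  have hj1 : (j + 1 : K) ≠ 0 := by exact_mod_cast j.succ_ne_zero
  have hup : ((n + 1).choose j : K) = n.choose j * (n + 1) / (n + 1 - j) := by
    rw [eq_div_iff hnj]
    have := congrArg (Nat.cast : ℕ → K) (Nat.choose_mul_succ_eq n j)
    push_cast [Nat.cast_sub (hj.trans n.le_succ)] at this
    exact this.symm
  have hup_succ : ((n + 1).choose (j + 1) : K) = n.choose j * (n + 1) / (j + 1) := by
    rw [eq_div_iff hj1]
    have := congrArg (Nat.cast : ℕ → K) (Nat.add_one_mul_choose_eq n j)
    push_cast at this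
    rw [← this, mul_comm]
  have hright : (m.choose (j + 1) : K) = m.choose j * (m - j) / (j + 1) := by
    rw [eq_div_iff hj1, cast_choose_succ_right_mul]
  rw [hup, hup_succ, hright]
  field_simp
  ring

theorem sum_range_choose_div_choose_s3 {m n N : ℕ} (hmN : m < N) (hNn : N ≤ n + 1) :
    ∑ j ∈ range N, (m.choose j : K) / n.choose j = (n + 1) / (n + 1 - m) := by
  have hnm : (n + 1 - m : K) ≠ 0 := sub_ne_zero.mpr (by exact_mod_cast (by omega : n + 1 ≠ m))
  have htelescope :
      (∑ j ∈ range N, (m.choose j : K) / n.choose j) * ((n + 1 - m) / (n + 1)) = 1 := by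
    rw [sum_mul, sum_congr rfl fun j hj => choose_div_choose_mul_eq_sub
      (Nat.lt_succ_iff.mp ((mem_range.mp hj).trans_le hNn)), sum_range_sub']
    simp [Nat.choose_eq_zero_of_lt hmN]
  rw [eq_div_iff hnm]
  field_simp at htelescope
  exact htelescope

end CharZeroField

theorem sum_Icc_hashTail_sub_mul {n k : ℕ} (hk : 1 ≤ k) (hkn : k ≤ n) (z : ℚ) :
    ∑ j ∈ Icc 1 n, (hashTail n k (j - 1) - hashTail n k j) * (z + j) =
      z + (n + 1) / (n + 2 - k) := by
  have hzero : hashTail n k 0 = 1 := by simp [hashTail]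
  have hlast : hashTail n k n = 0 := by
    simp [hashTail, Nat.choose_eq_zero_of_lt (by omega : k - 1 < n)]
  have htail : ∑ j ∈ range n, hashTail n k j = (n + 1) / (n + 2 - k) := by
    rw [show (n + 2 - k : ℚ) = n + 1 - (k - 1 : ℕ) by push_cast [Nat.cast_sub hk]; ring]
    exact sum_range_choose_div_choose_s3 (by omega) (by omega)
  rw [sum_Icc_sub_mul_add_eq, hzero, hlast, htail]
  ring

theorem prod_Icc_one_reflect {M R : Type*} [CommMonoid M] [Ring R] (f : R → M) (n : ℕ) :
    ∏ k ∈ Icc 1 n, f (n + 2 - k) = ∏ m ∈ Icc 2 (n + 1), f m := by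
  refine prod_nbij' (fun k => n + 2 - k) (fun m => n + 2 - m) ?_ ?_ ?_ ?_ ?_ <;>
    intro k hk <;> simp only [mem_Icc] at hk ⊢
  any_goals omega
  rw [Nat.cast_sub (by omega)]
  push_cast
  rfl

theorem prod_Icc_two_cast_eq_factorial {R : Type*} [CommSemiring R] (n : ℕ) :
    ∏ m ∈ Icc 2 (n + 1), (m : R) = (n + 1).factorial := by
  induction n with
  | zero => simp
  | succ n ih =>
    rw [prod_Icc_succ_top (by omega), ih, Nat.factorial_succ (n + 1)]
    push_cast
    ring

theorem expected_product_of_ranks_general (n : ℕ) (z : ℚ) :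
    (∏ k ∈ Finset.Icc 1 n,
        ∑ j ∈ Finset.Icc 1 n, (hashTail n k (j - 1) - hashTail n k j) * (z + (j : ℚ))) =
      (∏ k ∈ Finset.Icc 1 n, (z + ((n : ℚ) + 1) / ((n : ℚ) + 2 - (k : ℚ)))) ∧
    (∏ k ∈ Finset.Icc 1 n, (z + ((n : ℚ) + 1) / ((n : ℚ) + 2 - (k : ℚ)))) =
      (1 / (Nat.factorial (n + 1) : ℚ)) *
        ∏ k ∈ Finset.Icc 2 (n + 1), ((k : ℚ) * z + (n : ℚ) + 1) := by
  refine ⟨prod_congr rfl fun k hk => ?_, ?_⟩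
  · obtain ⟨hk, hkn⟩ := mem_Icc.mp hk
    exact sum_Icc_hashTail_sub_mul hk hkn z
  · have hsplit : ∀ m ∈ Icc 2 (n + 1), z + (n + 1) / (m : ℚ) = (m * z + n + 1) / m := by
      intro m hm
      have : (m : ℚ) ≠ 0 := Nat.cast_ne_zero.mpr (by grind)
      field_simp
      ring
    rw [prod_Icc_one_reflect (fun x : ℚ => z + (n + 1) / x), prod_congr rfl hsplit,
      prod_div_distrib, prod_Icc_two_cast_eq_factorial]
    ring

/-- By independence, the expectation of `(z+r_1)⋯(z+r_n)` is the product over `k`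
of `∑_j P(r_k = j)(z+j)`, where `P(r_k = j) = q_{k,j-1} - q_{k,j}`. -/
theorem expected_product_of_ranks (n : ℕ) (hn : 1 ≤ n) (z : ℚ) :
    (∏ k ∈ Finset.Icc 1 n,
        ∑ j ∈ Finset.Icc 1 n, (hashTail n k (j - 1) - hashTail n k j) * (z + (j : ℚ))) =
      (∏ k ∈ Finset.Icc 1 n, (z + ((n : ℚ) + 1) / ((n : ℚ) + 2 - (k : ℚ)))) ∧
    (∏ k ∈ Finset.Icc 1 n, (z + ((n : ℚ) + 1) / ((n : ℚ) + 2 - (k : ℚ)))) =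
      (1 / (Nat.factorial (n + 1) : ℚ)) *
        ∏ k ∈ Finset.Icc 2 (n + 1), ((k : ℚ) * z + (n : ℚ) + 1) :=
  expected_product_of_ranks_general n z
end

section
/- The coefficient of z^{n-2} in the polynomial ∏_{k=1}^n (z + (n+1)/(n+2-k)) equals ((n+1)^2/2)·(H_n^2 − H_n^{(2)}) − n(n+1)(H_n − 1). -/
/-!
By Vieta, the coefficient of `z^(n-2)` is the second elementary symmetric function `e₂` of the
numbers `(n+1)/j`, `2 ≤ j ≤ n+1`, and `2 e₂ = p₁² - p₂` for the power sums
`p₁ = (n+1)(H_n - 1) + 1` and `p₂ = (n+1)²(H_n^(2) - 1) + 1`.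
-/

open Finset Polynomial

theorem sum_powersetCard_succ_insert_prod {ι R : Type*} [DecidableEq ι] [CommSemiring R]
    {s : Finset ι} {x : ι} (hx : x ∉ s) (k : ℕ) (f : ι → R) :
    ∑ t ∈ (insert x s).powersetCard (k + 1), ∏ i ∈ t, f i =
      ∑ t ∈ s.powersetCard (k + 1), ∏ i ∈ t, f i + f x * ∑ t ∈ s.powersetCard k, ∏ i ∈ t, f i := by
  have hxt : ∀ t ∈ s.powersetCard k, x ∉ t := fun t ht hxt => hx (mem_powersetCard.1 ht |>.1 hxt)
  rw [powersetCard_succ_insert hx, sum_union, sum_image, mul_sum]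
  · exact congrArg _ (sum_congr rfl fun t ht => prod_insert (hxt t ht))
  · intro t ht u hu htu
    rw [← erase_insert (hxt t ht), htu, erase_insert (hxt u hu)]
  · exact disjoint_left.2 fun t ht hxt' => by
      obtain ⟨u, -, rfl⟩ := mem_image.1 hxt'
      exact hx (mem_powersetCard.1 ht |>.1 (mem_insert_self x u))

theorem sq_sum_eq_sum_sq_add_two_mul_sum_powersetCard_two {ι R : Type*} [CommSemiring R]
    (s : Finset ι) (f : ι → R) :
    (∑ i ∈ s, f i) ^ 2 = ∑ i ∈ s, f i ^ 2 + 2 * ∑ t ∈ s.powersetCard 2, ∏ i ∈ t, f i := by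
  classical
  induction s using Finset.induction_on with
  | empty => simp [powersetCard_eq_empty.2 (card_empty.trans_lt two_pos)]
  | insert x s hx ih =>
    rw [sum_powersetCard_succ_insert_prod hx, powersetCard_one, sum_map, sum_insert hx,
      sum_insert hx, add_sq, ih]
    simp only [Function.Embedding.coeFn_mk, prod_singleton]
    ring

theorem sum_Icc_one_comp_add_two_sub {R M : Type*} [AddGroupWithOne R] [AddCommGroup M]
    (g : R → M) (n : ℕ) :
    ∑ k ∈ Icc 1 n, g (n + 2 - k) = ∑ k ∈ Icc 1 n, g k + g (n + 1) - g 1 := by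
  have hreflect : ∑ k ∈ Icc 1 n, g (n + 2 - k) = ∑ j ∈ Ioc 1 (n + 1), g j := by
    refine sum_nbij' (fun k => n + 2 - k) (fun j => n + 2 - j) ?_ ?_ ?_ ?_ ?_ <;>
      intro k hk <;> simp only [mem_Icc, mem_Ioc] at hk ⊢
    any_goals omega
    push_cast [Nat.cast_sub (by omega : k ≤ n + 2)]
    rfl
  have hsplit := sum_Ioc_add_eq_sum_Icc (f := fun j : ℕ => g j) (by omega : 1 ≤ n + 1)
  rw [sum_Icc_succ_top (by omega)] at hsplit
  push_cast at hsplit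
  rw [hreflect, eq_sub_iff_add_eq, hsplit]

theorem coeff_z_pow_n_sub_two (n : ℕ) (hn : 2 ≤ n) :
    (∏ k ∈ Finset.Icc 1 n,
        (Polynomial.X + Polynomial.C (((n : ℚ) + 1) / ((n : ℚ) + 2 - (k : ℚ))))).coeff (n - 2) =
      (((n : ℚ) + 1) ^ 2 / 2) *
          ((∑ j ∈ Finset.Icc 1 n, (1 : ℚ) / (j : ℚ)) ^ 2 -
            ∑ j ∈ Finset.Icc 1 n, (1 : ℚ) / ((j : ℚ) ^ 2)) -
        (n : ℚ) * ((n : ℚ) + 1) * ((∑ j ∈ Finset.Icc 1 n, (1 : ℚ) / (j : ℚ)) - 1) := by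
  rw [prod_X_add_C_coeff _ _ (by simp), Nat.card_Icc, show n + 1 - 1 - (n - 2) = 2 by omega]
  set H := ∑ j ∈ Icc 1 n, (1 : ℚ) / j
  set H₂ := ∑ j ∈ Icc 1 n, (1 : ℚ) / j ^ 2
  have hn₁ : (n : ℚ) + 1 ≠ 0 := by positivity
  have hsum : ∑ k ∈ Icc 1 n, ((n : ℚ) + 1) / (n + 2 - k) = (n + 1) * H + 1 - (n + 1) := by
    rw [sum_Icc_one_comp_add_two_sub (fun x : ℚ => (n + 1) / x), mul_sum, div_self hn₁, div_one]
    simp only [mul_one_div]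
  have hsum_sq : ∑ k ∈ Icc 1 n, (((n : ℚ) + 1) / (n + 2 - k)) ^ 2 =
      (n + 1) ^ 2 * H₂ + 1 - (n + 1) ^ 2 := by
    rw [sum_Icc_one_comp_add_two_sub (fun x : ℚ => ((n + 1) / x) ^ 2), mul_sum, div_self hn₁,
      one_pow, div_one]
    simp only [div_pow, mul_one_div]
  have hnewton := sq_sum_eq_sum_sq_add_two_mul_sum_powersetCard_two (Icc 1 n)
    fun k : ℕ => ((n : ℚ) + 1) / (n + 2 - k)
  rw [hsum, hsum_sq] at hnewton
  linear_combination -hnewton / 2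
end

section
/- For the independent rank random variables r_1,...,r_n of uniform hashing, E((z+r_1^2)(z+r_2^2)···(z+r_n^2)) = ∏_{k=1}^n ( z + (n+1)(n+1+k)/((n+2-k)(n+3-k)) ). -/
lemma choose_cast_succ (a i : ℕ) (h : i ≤ a) :
    ((Nat.choose a (i+1) : ℚ)) * ((i : ℚ) + 1) = (Nat.choose a i : ℚ) * ((a : ℚ) - (i : ℚ)) := by
  have h1 := Nat.choose_succ_right_eq a i
  have h2 : ((Nat.choose a (i+1)) : ℚ) * (((i+1 : ℕ)) : ℚ)
      = (Nat.choose a i : ℚ) * (((a - i : ℕ)) : ℚ) := by exact_mod_cast h1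
  rw [Nat.cast_sub h] at h2
  push_cast at h2
  linarith [h2]

lemma sum_Icc_one (n : ℕ) (g : ℕ → ℚ) :
    ∑ j ∈ Finset.Icc 1 n, g j = ∑ i ∈ Finset.range n, g (i+1) := by
  induction n with
  | zero => simp
  | succ n ih =>
      rw [Finset.sum_Icc_succ_top (by omega), ih, Finset.sum_range_succ]

lemma factor_eq (n k : ℕ) (hk1 : 1 ≤ k) (hkn : k ≤ n) (z : ℚ) :
    (∑ j ∈ Finset.Icc 1 n, (hashTail n k (j - 1) - hashTail n k j) * (z + (j : ℚ) ^ 2)) =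
      z + ((n : ℚ) + 1) * ((n : ℚ) + 1 + (k : ℚ)) /
          ((((n : ℚ) + 2 - (k : ℚ))) * ((n : ℚ) + 3 - (k : ℚ))) := by
  obtain ⟨m, rfl⟩ : ∃ m, k = m + 1 := ⟨k - 1, by omega⟩
  have hmn : m < n := by omega
  have hMN : (m : ℚ) + 1 ≤ (n : ℚ) := by exact_mod_cast hmn
  have hp1 : (n : ℚ) - (m : ℚ) + 1 ≠ 0 := by intro h; linarith
  have hp2 : (n : ℚ) - (m : ℚ) + 2 ≠ 0 := by intro h; linarith
  obtain ⟨f, hfdef⟩ : ∃ f : ℕ → ℚ, ∀ i : ℕ, f i =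
      (-2) / ((n : ℚ) - (m : ℚ) + 2) * (i : ℚ) ^ 2
      + ((n : ℚ) - (m : ℚ)) * (2 * (n : ℚ) + 3)
          / (((n : ℚ) - (m : ℚ) + 1) * ((n : ℚ) - (m : ℚ) + 2)) * (i : ℚ)
      + ((n : ℚ) + 1) * ((n : ℚ) + (m : ℚ) + 2)
          / (((n : ℚ) - (m : ℚ) + 1) * ((n : ℚ) - (m : ℚ) + 2)) := ⟨_, fun _ => rfl⟩
  obtain ⟨q, hqdef⟩ : ∃ q : ℕ → ℚ, ∀ i : ℕ,
      q i = (Nat.choose m i : ℚ) / (Nat.choose n i : ℚ) := ⟨_, fun _ => rfl⟩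
  have key : ∀ i, i < n → f i * q i - f (i+1) * q (i+1) = (2 * (i : ℚ) + 1) * q i := by
    intro i hi
    rcases lt_trichotomy i m with him | him | him
    · -- i < m
      have hA := choose_cast_succ m i him.le
      have hB := choose_cast_succ n i hi.le
      have hY : (Nat.choose n i : ℚ) ≠ 0 :=
        Nat.cast_ne_zero.mpr (Nat.choose_pos hi.le).ne'
      have hi1 : (i : ℚ) + 1 ≠ 0 := by positivity
      have hNi : (n : ℚ) - (i : ℚ) ≠ 0 := by
        have : (i : ℚ) < (n : ℚ) := by exact_mod_cast hi
        intro h; linarith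
      have hA' : (Nat.choose m (i+1) : ℚ)
          = (Nat.choose m i : ℚ) * ((m : ℚ) - (i : ℚ)) / ((i : ℚ) + 1) := by
        rw [eq_div_iff hi1]; exact hA
      have hB' : (Nat.choose n (i+1) : ℚ)
          = (Nat.choose n i : ℚ) * ((n : ℚ) - (i : ℚ)) / ((i : ℚ) + 1) := by
        rw [eq_div_iff hi1]; exact hB
      simp only [hqdef, hfdef, hA', hB']
      push_cast
      field_simp
      ring
    · -- i = m
      have h0 : (Nat.choose m (i+1) : ℚ) = 0 := by
        exact_mod_cast Nat.choose_eq_zero_of_lt (by omega)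
      subst him
      have hfm : f i = 2 * (i : ℚ) + 1 := by
        rw [hfdef]
        field_simp
        ring
      rw [hqdef, hqdef, h0, hfm]
      ring
    · -- m < i
      have h0 : (Nat.choose m i : ℚ) = 0 := by
        exact_mod_cast Nat.choose_eq_zero_of_lt him
      have h1 : (Nat.choose m (i+1) : ℚ) = 0 := by
        exact_mod_cast Nat.choose_eq_zero_of_lt (by omega)
      rw [hqdef, hqdef, h0, h1]
      ring
  obtain ⟨H, hHdef⟩ : ∃ H : ℕ → ℚ, ∀ j : ℕ,
      H j = (z + (j : ℚ) ^ 2 + f j) * q j := ⟨_, fun _ => rfl⟩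
  have hhq : ∀ j, hashTail n (m+1) j = q j := by
    intro j; rw [hqdef]; simp [hashTail]
  rw [sum_Icc_one]
  have hsum : ∀ i ∈ Finset.range n,
      (hashTail n (m+1) (i + 1 - 1) - hashTail n (m+1) (i+1)) * (z + ((i+1 : ℕ) : ℚ) ^ 2)
        = H i - H (i+1) := by
    intro i hi
    have hi' : i < n := Finset.mem_range.mp hi
    have e1 : i + 1 - 1 = i := by omega
    rw [e1, hhq, hhq, hHdef, hHdef]
    push_cast
    linear_combination -(key i hi')
  rw [Finset.sum_congr rfl hsum, Finset.sum_range_sub' H n]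
  have hH0 : H 0 = z + ((n : ℚ) + 1) * ((n : ℚ) + (m : ℚ) + 2)
      / (((n : ℚ) - (m : ℚ) + 1) * ((n : ℚ) - (m : ℚ) + 2)) := by
    rw [hHdef, hqdef, hfdef]
    simp
  have hHn : H n = 0 := by
    rw [hHdef, hqdef]
    have h0 : (Nat.choose m n : ℚ) = 0 := by
      exact_mod_cast Nat.choose_eq_zero_of_lt hmn
    rw [h0]
    simp
  rw [hH0, hHn, sub_zero]
  have h1 : (n : ℚ) + 2 - ((m : ℚ) + 1) ≠ 0 := by intro h; linarith
  have h2 : (n : ℚ) + 3 - ((m : ℚ) + 1) ≠ 0 := by intro h; linarith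
  push_cast
  congr 1
  rw [div_eq_div_iff (by exact mul_ne_zero hp1 hp2) (by exact mul_ne_zero h1 h2)]
  ring

/-- By independence, `E((z+r_1²)⋯(z+r_n²))` is the product over `k` of
`∑_j P(r_k = j)(z+j²)`, and this equals `∏_k (z + (n+1)(n+1+k)/((n+2-k)(n+3-k)))`. -/
theorem expected_product_of_squared_ranks (n : ℕ) (hn : 1 ≤ n) (z : ℚ) :
    (∏ k ∈ Finset.Icc 1 n,
        ∑ j ∈ Finset.Icc 1 n, (hashTail n k (j - 1) - hashTail n k j) * (z + (j : ℚ) ^ 2)) =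
      ∏ k ∈ Finset.Icc 1 n,
        (z + ((n : ℚ) + 1) * ((n : ℚ) + 1 + (k : ℚ)) /
          ((((n : ℚ) + 2 - (k : ℚ))) * ((n : ℚ) + 3 - (k : ℚ)))) := by
  refine Finset.prod_congr rfl ?_
  intro k hk
  rw [Finset.mem_Icc] at hk
  exact factor_eq n k hk.1 hk.2 z
end

section
/- ∑_{k=1}^n (n+1)(n+1+k)/((n+2-k)(n+3-k)) = (n+1)(n − H_n) + n, where H_n is the n-th harmonic number. -/
/-!
Substituting `j = n + 1 - k` turns the summand into `(n + 1) (2n + 2 - j) / ((j + 1)(j + 2))`,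
and the partial fraction decomposition
`(c - x) / ((x + 1)(x + 2)) = (c + 2) (1/(x + 1) - 1/(x + 2)) - 1/(x + 1)` with `c = 2n + 2`
splits it into a telescoping sum, equal to `(2n + 4) (1/2 - 1/(n + 2)) = n`, and the shifted
harmonic sum `H_{n+1} - 1 = H_n + 1/(n + 1) - 1`.
-/

open Finset

theorem sum_Icc_one_reflect {R M : Type*} [AddGroupWithOne R] [AddCommMonoid M]
    (f : R → M) (n : ℕ) :
    ∑ k ∈ Icc 1 n, f ((n : R) + 1 - k) = ∑ k ∈ Icc 1 n, f k := by
  refine sum_nbij' (fun k ↦ n + 1 - k) (fun k ↦ n + 1 - k) ?_ ?_ ?_ ?_ ?_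
  all_goals intro k hk; simp only [mem_Icc] at hk ⊢
  · omega
  · omega
  · omega
  · omega
  · rw [Nat.cast_sub (by omega), Nat.cast_add, Nat.cast_one]

theorem sub_div_add_one_mul_add_two {K : Type*} [Field K] (c x : K) (h₁ : x + 1 ≠ 0)
    (h₂ : x + 2 ≠ 0) :
    (c - x) / ((x + 1) * (x + 2)) = (c + 2) * (1 / (x + 1) - 1 / (x + 2)) - 1 / (x + 1) := by
  field_simp
  ring

theorem sum_Icc_one_div_add_one_sub_one_div_add_two {K : Type*} [Field K] [CharZero K] (n : ℕ) :
    ∑ j ∈ Icc 1 n, (1 / ((j : K) + 1) - 1 / ((j : K) + 2)) = 1 / 2 - 1 / ((n : K) + 2) := by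
  have h_telescope :=
    sum_Ico_sub (M := K) (fun j : ℕ ↦ -1 / ((j : K) + 1)) (by omega : 1 ≤ n + 1)
  rw [Ico_add_one_right_eq_Icc] at h_telescope
  convert h_telescope using 1
  · refine sum_congr rfl fun j _ ↦ ?_
    push_cast
    ring
  · push_cast
    ring

theorem sum_Icc_one_div_add_one (n : ℕ) :
    ∑ j ∈ Icc 1 n, 1 / ((j : ℚ) + 1) = harmonic (n + 1) - 1 := by
  induction n with
  | zero => simp
  | succ n ih =>
    rw [sum_Icc_succ_top (by omega), ih, harmonic_succ (n + 1)]
    push_cast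
    ring

theorem expected_sum_of_squared_ranks_general (n : ℕ) :
    (∑ k ∈ Finset.Icc 1 n,
        ((n : ℚ) + 1) * ((n : ℚ) + 1 + (k : ℚ)) /
          (((n : ℚ) + 2 - (k : ℚ)) * ((n : ℚ) + 3 - (k : ℚ)))) =
      ((n : ℚ) + 1) * ((n : ℚ) - ∑ j ∈ Finset.Icc 1 n, (1 : ℚ) / (j : ℚ)) + (n : ℚ) := by
  set g : ℚ → ℚ := fun x ↦ (n + 1) * ((2 * n + 2 - x) / ((x + 1) * (x + 2))) with hg
  have h_reflect : ∀ k : ℕ, ((n : ℚ) + 1) * ((n : ℚ) + 1 + k) / ((n + 2 - k) * (n + 3 - k)) =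
      g (n + 1 - k) := fun k ↦ by rw [hg]; ring
  have h_partial : ∀ j ∈ Icc 1 n, g j =
      (n + 1) * ((2 * n + 4) * (1 / ((j : ℚ) + 1) - 1 / (j + 2)) - 1 / (j + 1)) := fun j _ ↦ by
    rw [hg]
    beta_reduce
    rw [sub_div_add_one_mul_add_two _ _ (by positivity) (by positivity)]
    ring
  simp_rw [h_reflect, sum_Icc_one_reflect g n]
  rw [sum_congr rfl h_partial, ← mul_sum, sum_sub_distrib, ← mul_sum,
    sum_Icc_one_div_add_one_sub_one_div_add_two, sum_Icc_one_div_add_one, harmonic_succ]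
  simp_rw [one_div, ← harmonic_eq_sum_Icc]
  push_cast
  field_simp
  ring

theorem expected_sum_of_squared_ranks (n : ℕ) (hn : 1 ≤ n) :
    (∑ k ∈ Finset.Icc 1 n,
        ((n : ℚ) + 1) * ((n : ℚ) + 1 + (k : ℚ)) /
          (((n : ℚ) + 2 - (k : ℚ)) * ((n : ℚ) + 3 - (k : ℚ)))) =
      ((n : ℚ) + 1) * ((n : ℚ) - ∑ j ∈ Finset.Icc 1 n, (1 : ℚ) / (j : ℚ)) + (n : ℚ) :=
  expected_sum_of_squared_ranks_general n
end

section
/- Let m = ⌊n/2⌋ and q_{km} = C(k-1,m)/C(n,m). Then ∏_{k=1}^n (1 − q_{km}) → ∏_{k=1}^∞ (1 − 2^{-k}) as n → ∞. -/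
/-!
Reversing the order of the factors, the `j`-th one is `1 - C(n-1-j, m)/C(n, m)`, and telescoping
`C(N-1, m)/C(N, m) = 1 - m/N` writes `C(n-1-j, m)/C(n, m)` as a product of `j + 1` factors
`1 - m/(n - i)`, each tending to `1/2` and each at most `1 - m/n ≤ 2/3` when `m = ⌊n/2⌋`.
So the `j`-th factor tends to `1 - 2^{-(j+1)}` with a summable geometric domination, and
dominated convergence for infinite products gives the limit.
-/

open Filter Finset Topology

/-- With `m = ⌊n/2⌋`, `chooseRatio m n (n - k + 1)` is the paper's `q_{km}`. -/
noncomputable def chooseRatio (m n r : ℕ) : ℝ := ((n - r).choose m : ℝ) / (n.choose m : ℝ)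

lemma chooseRatio_nonneg (m n r : ℕ) : 0 ≤ chooseRatio m n r := by
  unfold chooseRatio; positivity

lemma chooseRatio_eq_zero {m n r : ℕ} (hm : 0 < m) (h : n < m + r) : chooseRatio m n r = 0 := by
  rw [chooseRatio, Nat.choose_eq_zero_of_lt (by omega), Nat.cast_zero, zero_div]

lemma cast_choose_pred_div_choose {m N : ℕ} (h : m ≤ N) :
    ((N - 1).choose m : ℝ) / N.choose m = 1 - m / N := by
  cases N with
  | zero =>
    obtain rfl : m = 0 := by omega
    simp
  | succ N =>
    have key : (N.choose m : ℝ) * (N + 1) = (N + 1).choose m * (N + 1 - m) := by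
      exact_mod_cast Nat.choose_mul_succ_eq N m
    have hC : ((N + 1).choose m : ℝ) ≠ 0 := by exact_mod_cast (Nat.choose_pos h).ne'
    rw [Nat.add_sub_cancel, Nat.cast_succ]
    field_simp
    linarith

lemma chooseRatio_eq_prod {m n r : ℕ} (h : m + r ≤ n) :
    chooseRatio m n r = ∏ i ∈ range r, (1 - m / ((n : ℝ) - i)) := by
  induction r with
  | zero =>
    have : (n.choose m : ℝ) ≠ 0 := by exact_mod_cast (Nat.choose_pos (by omega)).ne'
    simp [chooseRatio, this]
  | succ r ih =>
    have hC : ((n - r).choose m : ℝ) ≠ 0 := by exact_mod_cast (Nat.choose_pos (by omega)).ne'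
    rw [prod_range_succ, ← ih (by omega), chooseRatio, chooseRatio, ← div_mul_div_cancel₀ hC,
      Nat.sub_succ', cast_choose_pred_div_choose (by omega), Nat.cast_sub (by omega), mul_comm]

lemma chooseRatio_le_pow {m n : ℕ} (h : m ≤ n) (r : ℕ) :
    chooseRatio m n r ≤ (1 - m / n) ^ r := by
  have hfrac : (m : ℝ) / n ≤ 1 := div_le_one_of_le₀ (by exact_mod_cast h) n.cast_nonneg
  by_cases hr : m + r ≤ n
  · have hfactor : ∀ i ∈ range r,
        0 ≤ 1 - m / ((n : ℝ) - i) ∧ 1 - m / ((n : ℝ) - i) ≤ 1 - m / n := by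
      intro i hi
      have hi : m + i < n := by have := mem_range.1 hi; omega
      have hpos : (0 : ℝ) < n - i := by
        rw [sub_pos]; exact_mod_cast (by omega : i < n)
      constructor
      · rw [sub_nonneg, div_le_one hpos, le_sub_iff_add_le]; exact_mod_cast hi.le
      · gcongr; linarith [(i.cast_nonneg : (0 : ℝ) ≤ i)]
    rw [chooseRatio_eq_prod hr]
    calc ∏ i ∈ range r, (1 - m / ((n : ℝ) - i))
        ≤ ∏ _i ∈ range r, (1 - m / (n : ℝ)) :=
          prod_le_prod (fun i hi => (hfactor i hi).1) (fun i hi => (hfactor i hi).2)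
      _ = (1 - m / n) ^ r := by rw [prod_const, card_range]
  · rcases Nat.eq_zero_or_pos m with rfl | hm
    · simp [chooseRatio]
    · rw [chooseRatio_eq_zero hm (by omega)]
      exact pow_nonneg (sub_nonneg.2 hfrac) r

lemma chooseRatio_half_le {n : ℕ} (hn : 2 ≤ n) (r : ℕ) :
    chooseRatio (n / 2) n r ≤ (2 / 3) ^ r := by
  refine (chooseRatio_le_pow (Nat.div_le_self n 2) r).trans (pow_le_pow_left₀ ?_ ?_ r)
  · rw [sub_nonneg]
    exact div_le_one_of_le₀ (by exact_mod_cast Nat.div_le_self n 2) n.cast_nonneg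
  · have hpos : (0 : ℝ) < n := by positivity
    rw [sub_le_iff_le_add, ← sub_le_iff_le_add', le_div_iff₀ hpos]
    have : (n : ℝ) ≤ 3 * (n / 2 : ℕ) := by exact_mod_cast (by omega : n ≤ 3 * (n / 2))
    linarith

lemma tendsto_natCast_div_two_div_atTop :
    Tendsto (fun n : ℕ => ((n / 2 : ℕ) : ℝ) / n) atTop (𝓝 (1 / 2)) := by
  have := (tendsto_nat_floor_mul_div_atTop (R := ℝ) (a := 1 / 2) (by norm_num)).comp
    tendsto_natCast_atTop_atTop
  refine this.congr fun n => ?_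
  simp only [Function.comp_apply, one_div_mul_eq_div]
  rw [show ((2 : ℝ)) = ((2 : ℕ) : ℝ) by norm_num, Nat.floor_div_eq_div]

lemma tendsto_natCast_div_two_div_sub_atTop (x : ℝ) :
    Tendsto (fun n : ℕ => ((n / 2 : ℕ) : ℝ) / (n - x)) atTop (𝓝 (1 / 2)) := by
  have := tendsto_natCast_div_two_div_atTop.mul (tendsto_natCast_div_add_atTop (-x))
  rw [mul_one] at this
  refine this.congr' ?_
  filter_upwards [eventually_gt_atTop 0] with n hn
  rw [← sub_eq_add_neg, div_mul_div_cancel₀ (by positivity)]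

lemma tendsto_chooseRatio_half (r : ℕ) :
    Tendsto (fun n => chooseRatio (n / 2) n r) atTop (𝓝 ((1 / 2) ^ r)) := by
  have hprod := tendsto_finsetProd (range r) fun i _ =>
    tendsto_const_nhds (x := (1 : ℝ)) |>.sub (tendsto_natCast_div_two_div_sub_atTop i)
  rw [prod_const, card_range, show (1 : ℝ) - 1 / 2 = 1 / 2 by norm_num] at hprod
  refine hprod.congr' ?_
  filter_upwards [eventually_ge_atTop (2 * r)] with n hn
  exact (chooseRatio_eq_prod (by omega)).symm

lemma prod_one_sub_choose_eq_tprod {n : ℕ} (hn : 2 ≤ n) :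
    ∏ k ∈ Icc 1 n, ((1 : ℝ) - ((k - 1).choose (n / 2) : ℝ) / (n.choose (n / 2) : ℝ)) =
      ∏' j, (1 - chooseRatio (n / 2) n (j + 1)) := by
  rw [tprod_eq_prod (s := range n) fun j hj => by
    rw [chooseRatio_eq_zero (by omega) (by rw [mem_range, not_lt] at hj; omega), sub_zero]]
  rw [← prod_range_reflect, ← Ico_add_one_right_eq_Icc, prod_Ico_eq_prod_range,
    Nat.add_sub_cancel]
  refine prod_congr rfl fun j hj => ?_
  rw [chooseRatio]
  congr 4
  have := mem_range.1 hj
  omega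

theorem max_rank_probability_limit :
    Tendsto
      (fun n : ℕ =>
        ∏ k ∈ Finset.Icc 1 n,
          ((1 : ℝ) - (Nat.choose (k - 1) (n / 2) : ℝ) / (Nat.choose n (n / 2) : ℝ)))
      atTop (nhds (∏' k : ℕ, ((1 : ℝ) - (1 / 2) ^ (k + 1)))) := by
  have hbound : ∀ᶠ n in atTop, ∀ j,
      ‖-chooseRatio (n / 2) n (j + 1)‖ ≤ (2 / 3 : ℝ) ^ (j + 1) := by
    filter_upwards [eventually_ge_atTop 2] with n hn j
    rw [norm_neg, Real.norm_of_nonneg (chooseRatio_nonneg _ _ _)]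
    exact chooseRatio_half_le hn _
  have hsum : Summable fun j : ℕ => (2 / 3 : ℝ) ^ (j + 1) :=
    (summable_nat_add_iff 1).2 (summable_geometric_of_lt_one (by norm_num) (by norm_num))
  have hlim := tendsto_tprod_one_add_of_dominated_convergence hsum
    (fun j => (tendsto_chooseRatio_half (j + 1)).neg) hbound
  simp only [← sub_eq_add_neg] at hlim
  refine hlim.congr' ?_
  filter_upwards [eventually_ge_atTop 2] with n hn
  exact (prod_one_sub_choose_eq_tprod hn).symm
end
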